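/- Suppose the edge {u,v} is admissible. If e ∈ K is an edge with e ∉ {{u,v}, e₁′, e₂′} and e is paired with a vertex r in K, then ξ(e) is paired with ξ(r) in the contracted complex K' (with respect to the induced order and induced height). -/

import Mathlib

open Classical Finset

noncomputable section

variable {V : Type*} [Fintype V] [DecidableEq V]

/-- `K` is a finite abstract simplicial complex on the vertex set `V`. -/
def IsComplex (K : Finset (Finset V)) : Prop :=
  (∀ σ ∈ K, σ.Nonempty) ∧ ∀ σ ∈ K, ∀ τ : Finset V, τ ⊆ σ → τ.Nonempty → τ ∈ K

/-- `h` is a height function on `K`. -/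
def IsHeight (K : Finset (Finset V)) (h : Finset V → ℝ) : Prop :=
  ∀ σ ∈ K, ∀ τ ∈ K, σ ⊆ τ → h σ ≤ h τ

/-- The vertex map sending `v` to `u` and fixing all other vertices. -/
def cmap (u v : V) : V → V := fun x => if x = v then u else x

/-- The contraction `ξ` on simplices. -/
def xi (u v : V) (σ : Finset V) : Finset V := σ.image (cmap u v)

/-- The link of a simplex `σ` in `K`. -/
def lk (K : Finset (Finset V)) (σ : Finset V) : Finset (Finset V) :=
  K.filter fun τ => τ ∩ σ = ∅ ∧ τ ∪ σ ∈ K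

/-- The edge `{u,v}` satisfies the link condition. -/
def LinkCond (K : Finset (Finset V)) (u v : V) : Prop :=
  lk K {u, v} = lk K {u} ∩ lk K {v}

/-- `K` is a `2`-dimensional complex in which every simplex is the face of a triangle and
every edge is contained in exactly two triangles (the combinatorial consequences of the
underlying space being a closed `2`-manifold). -/
def ClosedTwoManifold (K : Finset (Finset V)) : Prop :=
  (∀ σ ∈ K, σ.card ≤ 3) ∧
  (∀ σ ∈ K, ∃ t ∈ K, t.card = 3 ∧ σ ⊆ t) ∧
  (∀ e ∈ K, e.card = 2 → ∃ s ∈ K, ∃ t ∈ K, s ≠ t ∧ s.card = 3 ∧ t.card = 3 ∧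
    e ⊆ s ∧ e ⊆ t ∧ ∀ r ∈ K, r.card = 3 → e ⊆ r → r = s ∨ r = t)

/-- `prec` is a linear order on `K` refining the height function, with ties broken by
dimension (lower dimensional simplices first). -/
def PrecOK (K : Finset (Finset V)) (h : Finset V → ℝ)
    (prec : Finset V → Finset V → Prop) : Prop :=
  (∀ σ, ¬ prec σ σ) ∧
  (∀ σ τ ρ, prec σ τ → prec τ ρ → prec σ ρ) ∧
  (∀ σ ∈ K, ∀ τ ∈ K, σ ≠ τ → prec σ τ ∨ prec τ σ) ∧
  (∀ σ ∈ K, ∀ τ ∈ K, h σ < h τ → prec σ τ) ∧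
  (∀ σ ∈ K, ∀ τ ∈ K, h σ = h τ → σ.card < τ.card → prec σ τ)

/-- The graph `G_{≺e}` on the vertices of `K` whose edges are the edges of `K` strictly
preceding `e` under `≺`. -/
def vertGraph (K : Finset (Finset V)) (prec : Finset V → Finset V → Prop)
    (e : Finset V) : SimpleGraph V where
  Adj x y := x ≠ y ∧ ({x, y} : Finset V) ∈ K ∧ prec {x, y} e
  symm := by
    constructor
    rintro x y ⟨hxy, hK, hp⟩
    exact ⟨hxy.symm, by rwa [Finset.pair_comm], by rwa [Finset.pair_comm]⟩
  loopless := by constructor; rintro x ⟨hx, -⟩; exact hx rfl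

/-- The graph `G^{≻e}` on the triangles of `K`, two triangles being adjacent if they share
an edge strictly succeeding `e` under `≺`. -/
def triGraph (K : Finset (Finset V)) (prec : Finset V → Finset V → Prop)
    (e : Finset V) : SimpleGraph (Finset V) where
  Adj s t := s ≠ t ∧ s ∈ K ∧ t ∈ K ∧ s.card = 3 ∧ t.card = 3 ∧
    ∃ d : Finset V, d ∈ K ∧ d.card = 2 ∧ d ⊆ s ∧ d ⊆ t ∧ prec e d
  symm := by
    constructor
    rintro s t ⟨h1, h2, h3, h4, h5, d, hd1, hd2, hd3, hd4, hd5⟩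
    exact ⟨h1.symm, h3, h2, h5, h4, d, hd1, hd2, hd4, hd3, hd5⟩
  loopless := by constructor; rintro s ⟨hs, -⟩; exact hs rfl

/-- `w` is the `≺`-least vertex of the connected component of `x`. -/
def LeastVert (G : SimpleGraph V) (prec : Finset V → Finset V → Prop) (x w : V) : Prop :=
  G.Reachable x w ∧ ∀ w', G.Reachable x w' → w = w' ∨ prec {w} {w'}

/-- `w` is the `≺`-greatest triangle of the connected component of `s`. -/
def GreatestTri (G : SimpleGraph (Finset V)) (prec : Finset V → Finset V → Prop)
    (s w : Finset V) : Prop :=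
  G.Reachable s w ∧ ∀ w', G.Reachable s w' → w = w' ∨ prec w' w

/-- The edge `e = {x,y}` is paired with the vertex `w`: the endpoints `x` and `y` lie in
distinct connected components of `G_{≺e}` and `w` is the `≺`-greater of the two `≺`-least
vertices of those components. -/
def PairedVE (K : Finset (Finset V)) (prec : Finset V → Finset V → Prop)
    (w : V) (e : Finset V) : Prop :=
  ∃ x y wx wy, e = {x, y} ∧ x ≠ y ∧ e ∈ K ∧
    ¬ (vertGraph K prec e).Reachable x y ∧
    LeastVert (vertGraph K prec e) prec x wx ∧
    LeastVert (vertGraph K prec e) prec y wy ∧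
    ((prec {wx} {wy} ∧ w = wy) ∨ (prec {wy} {wx} ∧ w = wx))

/-- The edge `e`, contained in the two triangles `s` and `t`, is paired with the triangle
`w`: `s` and `t` lie in distinct connected components of `G^{≻e}` and `w` is the
`≺`-smaller of the two `≺`-greatest triangles of those components. -/
def PairedET (K : Finset (Finset V)) (prec : Finset V → Finset V → Prop)
    (e w : Finset V) : Prop :=
  ∃ s t ws wt : Finset V, s ≠ t ∧ s ∈ K ∧ t ∈ K ∧ s.card = 3 ∧ t.card = 3 ∧
    e ⊆ s ∧ e ⊆ t ∧ e ∈ K ∧ e.card = 2 ∧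
    ¬ (triGraph K prec e).Reachable s t ∧
    GreatestTri (triGraph K prec e) prec s ws ∧
    GreatestTri (triGraph K prec e) prec t wt ∧
    ((prec ws wt ∧ w = ws) ∨ (prec wt ws ∧ w = wt))

/-- `σ` is the `≺`-least `ξ`-preimage in `K` of `σ'`. -/
def MinPre (K : Finset (Finset V)) (u v : V) (prec : Finset V → Finset V → Prop)
    (σ' σ : Finset V) : Prop :=
  σ ∈ K ∧ xi u v σ = σ' ∧ ∀ ρ ∈ K, xi u v ρ = σ' → ρ = σ ∨ prec σ ρ

/-- The order induced on the contracted complex `K'`: `σ' ≺ τ'` iff the `≺`-least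
`ξ`-preimage of `σ'` precedes that of `τ'`. -/
def precInd (K : Finset (Finset V)) (u v : V) (prec : Finset V → Finset V → Prop)
    (σ' τ' : Finset V) : Prop :=
  ∃ σ τ : Finset V, MinPre K u v prec σ' σ ∧ MinPre K u v prec τ' τ ∧ prec σ τ

end

/-!
The link condition and `e ∉ {e₁', e₂'}` make `e` the `≺`-least preimage of `ξ(e)`: any
other preimage is a coface of `e` or, for `e = {z,u}`, the edge `{z,v}` (or vice versa), and
then both span a triangle `tᵢ` in which `e = eᵢ ≺ eᵢ'`. Hence an edge of `K'` precedes `ξ(e)`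
iff it is the image of an edge preceding `e`, so `G'_{≺ξ(e)}` is, up to the isolated vertex
`v`, the image of `G_{≺e} + uv` under `v ↦ u`; on vertices `≠ v` the induced order is `≺`.

It remains to see that adding `uv` to `G_{≺e}` keeps `e` paired with `r`. If `{u,v} ≺ e`, the
edge is already there. Otherwise, as `{u,v}` is paired with `v`, the vertex `v` is least in
its component of `G_{≺{u,v}} ⊇ G_{≺e} + e`. So the endpoints of `e` stay apart, and the merge
can only lower the least vertex `v` of one endpoint's component to a vertex `≼ u ≺ v`, which
stays below the least vertex of the other component.
-/

section Order

variable {V : Type*} {K : Finset (Finset V)} {h : Finset V → ℝ}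
  {prec : Finset V → Finset V → Prop}

theorem PrecOK.isStrictOrder (hprec : PrecOK K h prec) : IsStrictOrder (Finset V) prec where
  irrefl := hprec.1
  trans := hprec.2.1

theorem PrecOK.prec_of_ssubset (hh : IsHeight K h) (hprec : PrecOK K h prec) {σ τ : Finset V}
    (hσ : σ ∈ K) (hτ : τ ∈ K) (hστ : σ ⊂ τ) : prec σ τ :=
  (hh σ hσ τ hτ hστ.subset).lt_or_eq.elim (hprec.2.2.2.1 σ hσ τ hτ)
    fun heq => hprec.2.2.2.2 σ hσ τ hτ heq (card_lt_card hστ)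

theorem PrecOK.exists_least [Fintype V] (hprec : PrecOK K h prec) {S : Finset (Finset V)}
    (hSK : S ⊆ K) (hS : S.Nonempty) : ∃ m ∈ S, ∀ σ ∈ S, σ = m ∨ prec m σ := by
  have := hprec.isStrictOrder
  obtain ⟨m, hm, hmin⟩ :=
    (Finite.wellFounded_of_trans_of_irrefl prec).has_min (S : Set (Finset V)) hS
  refine ⟨m, hm, fun σ hσ => or_iff_not_imp_left.2 fun hσm => ?_⟩
  exact (hprec.2.2.1 σ (hSK hσ) m (hSK hm) hσm).resolve_left (hmin σ hσ)

end Order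

namespace SimpleGraph

variable {α β : Type*} {G G₁ : SimpleGraph α} {G' : SimpleGraph β}

theorem Reachable.map_of_adj {f : α → β}
    (hf : ∀ a b, G.Adj a b → f a = f b ∨ G'.Adj (f a) (f b)) {p q : α}
    (hpq : G.Reachable p q) : G'.Reachable (f p) (f q) := by
  rw [reachable_iff_reflTransGen] at hpq
  induction hpq with
  | refl => rfl
  | tail _ hbc ih => exact (hf _ _ hbc).elim (fun h => h ▸ ih) fun h => ih.trans h.reachable

theorem Reachable.of_map {f : α → β} (hfib : ∀ p q, f p = f q → G.Reachable p q)
    (hlift : ∀ a b, G'.Adj a b → ∃ p q, G.Adj p q ∧ f p = a ∧ f q = b) {p q : α}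
    (hpq : G'.Reachable (f p) (f q)) : G.Reachable p q := by
  suffices ∀ a, G'.Reachable a (f q) → ∀ p, f p = a → G.Reachable p q from this _ hpq p rfl
  intro a ha
  rw [reachable_iff_reflTransGen] at ha
  induction ha using Relation.ReflTransGen.head_induction_on with
  | refl => exact fun p hp => hfib p q hp
  | head hac _ ih =>
    intro p hp
    obtain ⟨p', q', hadj, hp', hq'⟩ := hlift _ _ hac
    exact (hfib p p' (hp.trans hp'.symm)).trans (hadj.reachable.trans (ih q' hq'))

theorem reachable_sup_edge (u v : α) : (G ⊔ edge u v).Reachable u v := by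
  by_cases huv : u = v
  · exact huv ▸ Reachable.rfl
  · exact Adj.reachable (Or.inr ((edge_adj ..).2 ⟨Or.inl ⟨rfl, rfl⟩, huv⟩))

theorem reachable_sup_edge_iff {u v a b : α} :
    (G ⊔ edge u v).Reachable a b ↔ G.Reachable a b ∨
      ((G.Reachable a u ∨ G.Reachable a v) ∧ (G.Reachable b u ∨ G.Reachable b v)) := by
  constructor
  · rw [reachable_iff_reflTransGen]
    intro hab
    induction hab with
    | refl => exact Or.inl Reachable.rfl
    | @tail b c _ hbc ih =>
      rcases hbc with hbc | hbc
      · refine ih.imp (·.trans hbc.reachable) (And.imp_right ?_)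
        exact Or.imp (hbc.reachable.symm.trans ·) (hbc.reachable.symm.trans ·)
      · obtain ⟨⟨rfl, rfl⟩ | ⟨rfl, rfl⟩, -⟩ := (edge_adj ..).1 hbc
        · exact Or.inr ⟨ih.elim (fun h => Or.inl h) (·.1), Or.inr Reachable.rfl⟩
        · exact Or.inr ⟨ih.elim (fun h => Or.inr h) (·.1), Or.inl Reachable.rfl⟩
  · have hle : G ≤ G ⊔ edge u v := le_sup_left
    have huv := reachable_sup_edge (G := G) u v
    have hT : ∀ c, G.Reachable c u ∨ G.Reachable c v → (G ⊔ edge u v).Reachable c u :=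
      fun c hc => hc.elim (·.mono hle) fun h => (h.mono hle).trans huv.symm
    rintro (hab | ⟨ha, hb⟩)
    · exact hab.mono hle
    · exact (hT a ha).trans (hT b hb).symm

theorem not_reachable_sup_edge {u v x y : α} (hle : G ≤ G₁) (hxy : G₁.Adj x y)
    (huv : ¬G₁.Reachable u v) (hnxy : ¬G.Reachable x y) : ¬(G ⊔ edge u v).Reachable x y := by
  rw [reachable_sup_edge_iff]
  rintro (h | ⟨hx | hx, hy | hy⟩)
  · exact hnxy h
  · exact hnxy (hx.trans hy.symm)
  · exact huv (((hx.symm.mono hle).trans hxy.reachable).trans (hy.mono hle))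
  · exact huv (((hy.symm.mono hle).trans hxy.reachable.symm).trans (hx.mono hle))
  · exact hnxy (hx.trans hy.symm)

end SimpleGraph

section LeastVert

open SimpleGraph

variable {V : Type*} {G G₁ : SimpleGraph V} {prec : Finset V → Finset V → Prop}
  {u v x y w : V}

theorem LeastVert.of_reachable (hw : LeastVert G prec y w) (hxy : G.Reachable x y) :
    LeastVert G prec x w :=
  ⟨hxy.trans hw.1, fun w' h => hw.2 w' (hxy.symm.trans h)⟩

theorem LeastVert.mono (hle : G ≤ G₁) (hw : LeastVert G₁ prec x w) (hxw : G.Reachable x w) :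
    LeastVert G prec x w :=
  ⟨hxw, fun w' h => hw.2 w' (h.mono hle)⟩

variable [IsStrictOrder (Finset V) prec]

theorem prec_of_eq_or_prec_of_prec {a b c d : V} (hab : a = b ∨ prec {a} {b})
    (hbc : prec {b} {c}) (hcd : c = d ∨ prec {c} {d}) : prec {a} {d} := by
  rcases hab with rfl | hab <;> rcases hcd with rfl | hcd
  exacts [hbc, _root_.trans hbc hcd, _root_.trans hab hbc, _root_.trans (_root_.trans hab hbc) hcd]

theorem LeastVert.not_prec (hw : LeastVert G prec x w) (hxy : G.Reachable x y) :
    ¬prec {y} {w} := fun hyw =>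
  (hw.2 y hxy).elim (fun h => irrefl _ (h ▸ hyw)) fun h => asymm h hyw

theorem LeastVert.unique {w' : V} (hw : LeastVert G prec x w) (hw' : LeastVert G prec x w') :
    w = w' :=
  (hw.2 w' hw'.1).resolve_right (hw'.not_prec hw.1)

theorem LeastVert.ne_of_sup_edge (hw : LeastVert (G ⊔ edge u v) prec x w)
    (huv : prec {u} {v}) : w ≠ v := by
  rintro rfl
  exact hw.not_prec (hw.1.trans (reachable_sup_edge u w).symm) huv

theorem LeastVert.sup_edge (hw : LeastVert G prec x w) (hv : LeastVert G prec v v)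
    (huv : prec {u} {v}) (hwv : w ≠ v) : LeastVert (G ⊔ edge u v) prec x w := by
  refine ⟨hw.1.mono le_sup_left, fun w' hw' => ?_⟩
  rcases reachable_sup_edge_iff.1 hw' with h | ⟨hx, hw'u⟩
  · exact hw.2 w' h
  have hxu : G.Reachable x u := hx.resolve_right fun hxv => hwv (hw.unique (hv.of_reachable hxv))
  rcases hw'u with hw'u | hw'v
  · exact hw.2 w' (hxu.trans hw'u.symm)
  · exact Or.inr (prec_of_eq_or_prec_of_prec (hw.2 u hxu) huv (hv.2 w' hw'v.symm))

theorem LeastVert.sup_edge_of_reachable {m : V} (hm : LeastVert G prec u m)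
    (hv : LeastVert G prec v v) (huv : prec {u} {v}) (hxv : G.Reachable x v) :
    LeastVert (G ⊔ edge u v) prec x m := by
  have hmv : m ≠ v := by
    rintro rfl
    exact hm.not_prec Reachable.rfl huv
  exact (hm.sup_edge hv huv hmv).of_reachable
    ((hxv.mono le_sup_left).trans (reachable_sup_edge u v).symm)

end LeastVert

section Pairing

open SimpleGraph

variable {V : Type*} {G G₁ : SimpleGraph V} {prec : Finset V → Finset V → Prop}
  {u v x y w : V}

/-- The combinatorial content of `PairedVE`, for an arbitrary graph in place of `G_{≺e}`. -/
def IsPairedIn (G : SimpleGraph V) (prec : Finset V → Finset V → Prop) (w x y : V) : Prop :=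
  ¬G.Reachable x y ∧ ∃ wx wy, LeastVert G prec x wx ∧ LeastVert G prec y wy ∧
    ((prec {wx} {wy} ∧ w = wy) ∨ (prec {wy} {wx} ∧ w = wx))

theorem IsPairedIn.symm (hP : IsPairedIn G prec w x y) : IsPairedIn G prec w y x :=
  let ⟨hxy, wx, wy, hx, hy, hmax⟩ := hP
  ⟨fun h => hxy h.symm, wy, wx, hy, hx, hmax.symm⟩

theorem IsPairedIn.leastVert_right (hP : IsPairedIn G prec v u v) : LeastVert G prec v v := by
  obtain ⟨huv, wu, wv, hu, hv, ⟨-, rfl⟩ | ⟨-, rfl⟩⟩ := hP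
  · exact hv
  · exact absurd hu.1 huv

variable [IsStrictOrder (Finset V) prec]

theorem IsPairedIn.sup_edge_of_not_reachable (hP : IsPairedIn G prec w x y)
    (hv : LeastVert G prec v v) (huv : prec {u} {v}) (hxv : ¬G.Reachable x v)
    (hyv : ¬G.Reachable y v) (hxy : ¬(G ⊔ edge u v).Reachable x y) :
    IsPairedIn (G ⊔ edge u v) prec w x y := by
  obtain ⟨-, wx, wy, hx, hy, hmax⟩ := hP
  refine ⟨hxy, wx, wy, hx.sup_edge hv huv ?_, hy.sup_edge hv huv ?_, hmax⟩
  · rintro rfl; exact hxv hx.1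
  · rintro rfl; exact hyv hy.1

theorem IsPairedIn.sup_edge_of_reachable (hP : IsPairedIn G prec w x y) (hle : G ≤ G₁)
    (hadj : G₁.Adj x y) (hv : LeastVert G₁ prec v v) (huv : prec {u} {v}) {m : V}
    (hm : LeastVert G prec u m) (hxv : G.Reachable x v)
    (hxy : ¬(G ⊔ edge u v).Reachable x y) : IsPairedIn (G ⊔ edge u v) prec w x y := by
  obtain ⟨hnxy, wx, wy, hx, hy, hmax⟩ := hP
  have hvG : LeastVert G prec v v := hv.mono hle Reachable.rfl
  have hwx : wx = v := hx.unique (hvG.of_reachable hxv)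
  have hvwy : prec {v} {wy} := by
    have hvwy : G₁.Reachable v wy :=
      (hxv.symm.mono hle).trans (hadj.reachable.trans (hy.1.mono hle))
    refine (hv.2 wy hvwy).resolve_left ?_
    rintro rfl
    exact hnxy (hxv.trans hy.1.symm)
  have hw : w = wy := by
    subst hwx
    exact hmax.elim And.right fun h => absurd h.1 (asymm hvwy)
  refine ⟨hxy, m, wy, hm.sup_edge_of_reachable hvG huv hxv, hy.sup_edge hvG huv ?_, ?_⟩
  · rintro rfl
    exact irrefl _ hvwy
  · exact Or.inl ⟨prec_of_eq_or_prec_of_prec (hm.2 u Reachable.rfl) huv (Or.inr hvwy), hw⟩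

theorem IsPairedIn.sup_edge (hP : IsPairedIn G prec w x y) (hle : G ≤ G₁)
    (hadj : G₁.Adj x y) (huvP : IsPairedIn G₁ prec v u v) (huv : prec {u} {v}) {m : V}
    (hm : LeastVert G prec u m) : IsPairedIn (G ⊔ edge u v) prec w x y := by
  have hv := huvP.leastVert_right
  have hxy : ¬(G ⊔ edge u v).Reachable x y := not_reachable_sup_edge hle hadj huvP.1 hP.1
  by_cases hxv : G.Reachable x v
  · exact hP.sup_edge_of_reachable hle hadj hv huv hm hxv hxy
  by_cases hyv : G.Reachable y v
  · exact (hP.symm.sup_edge_of_reachable hle hadj.symm hv huv hm hyv fun h => hxy h.symm).symm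
  exact hP.sup_edge_of_not_reachable (hv.mono hle Reachable.rfl) huv hxv hyv hxy

end Pairing

section Contraction

open SimpleGraph

variable {V : Type*} [DecidableEq V] {K : Finset (Finset V)} {h : Finset V → ℝ}
  {prec : Finset V → Finset V → Prop} {u v : V}

theorem cmap_left : cmap u v u = u := by simp [cmap]

theorem cmap_right : cmap u v v = u := by simp [cmap]

theorem cmap_of_ne {z : V} (hz : z ≠ v) : cmap u v z = z := if_neg hz

theorem cmap_ne (hne : u ≠ v) (z : V) : cmap u v z ≠ v := by
  unfold cmap
  split_ifs with hz
  exacts [hne, hz]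

theorem xi_singleton (z : V) : xi u v {z} = {cmap u v z} := image_singleton _ _

theorem xi_pair (p q : V) : xi u v {p, q} = {cmap u v p, cmap u v q} := by
  simp [xi, image_insert]

theorem xi_of_notMem {σ : Finset V} (hv : v ∉ σ) : xi u v σ = σ := by
  conv_rhs => rw [← image_id (s := σ)]
  exact image_congr fun z hz => cmap_of_ne fun hzv => hv (hzv ▸ hz)

theorem notMem_xi (hne : u ≠ v) (σ : Finset V) : v ∉ xi u v σ := by
  simp only [xi, mem_image, not_exists, not_and]
  exact fun z _ => cmap_ne hne z

theorem reachable_cmap {G : SimpleGraph V} (p : V) : (G ⊔ edge u v).Reachable p (cmap u v p) := by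
  by_cases hp : p = v
  · rw [hp, cmap_right]; exact (reachable_sup_edge u v).symm
  · rw [cmap_of_ne hp]

theorem mem_of_sup_edge_adj (huv : ({u, v} : Finset V) ∈ K) {e : Finset V} {a b : V}
    (hab : (vertGraph K prec e ⊔ edge u v).Adj a b) : ({a, b} : Finset V) ∈ K := by
  rcases hab with hab | hab
  · exact hab.2.1
  · obtain ⟨⟨rfl, rfl⟩ | ⟨rfl, rfl⟩, -⟩ := (edge_adj ..).1 hab
    exacts [huv, pair_comm a b ▸ huv]

theorem singleton_mem_of_reachable (hK : IsComplex K) {G : SimpleGraph V}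
    (hG : ∀ a b, G.Adj a b → ({a, b} : Finset V) ∈ K) {x y : V} (hx : ({x} : Finset V) ∈ K)
    (hxy : G.Reachable x y) : ({y} : Finset V) ∈ K := by
  rw [reachable_iff_reflTransGen] at hxy
  induction hxy with
  | refl => exact hx
  | tail _ hbc => exact hK.2 _ (hG _ _ hbc) _ (by simp) (singleton_nonempty _)

theorem exists_leastVert [Fintype V] (hK : IsComplex K) (hprec : PrecOK K h prec)
    {G : SimpleGraph V} (hG : ∀ a b, G.Adj a b → ({a, b} : Finset V) ∈ K) {x : V}
    (hx : ({x} : Finset V) ∈ K) : ∃ w, LeastVert G prec x w := by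
  obtain ⟨_, hm, hmin⟩ := hprec.exists_least (S := (univ.filter (G.Reachable x)).image ({·}))
    (by simpa [subset_iff] using fun y => singleton_mem_of_reachable hK hG hx)
    ⟨{x}, by simp⟩
  obtain ⟨w, hw, rfl⟩ := mem_image.1 hm
  refine ⟨w, (mem_filter.1 hw).2, fun w' hw' => ?_⟩
  simpa [eq_comm] using hmin {w'} (by simpa using hw')

theorem vertGraph_mono [IsTrans (Finset V) prec] {e e' : Finset V} (hee' : prec e e') :
    vertGraph K prec e ≤ vertGraph K prec e' :=
  fun _ _ hab => ⟨hab.1, hab.2.1, _root_.trans hab.2.2 hee'⟩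

theorem pairedVE_iff {w : V} {e : Finset V} : PairedVE K prec w e ↔
    e ∈ K ∧ ∃ x y, e = {x, y} ∧ IsPairedIn (vertGraph K prec e) prec w x y := by
  constructor
  · rintro ⟨x, y, wx, wy, rfl, -, heK, hxy, hx, hy, hmax⟩
    exact ⟨heK, x, y, rfl, hxy, wx, wy, hx, hy, hmax⟩
  · rintro ⟨heK, x, y, rfl, hxy, wx, wy, hx, hy, hmax⟩
    exact ⟨x, y, wx, wy, rfl, fun h => hxy (h ▸ Reachable.rfl), heK, hxy, hx, hy, hmax⟩

theorem PairedVE.isPairedIn {w a b : V} (hP : PairedVE K prec w {a, b}) :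
    IsPairedIn (vertGraph K prec {a, b}) prec w a b := by
  obtain ⟨-, x, y, hab, hP⟩ := pairedVE_iff.1 hP
  have hx : x ∈ ({a, b} : Finset V) := hab ▸ mem_insert_self x {y}
  have hy : y ∈ ({a, b} : Finset V) := hab ▸ mem_insert_of_mem (mem_singleton_self y)
  simp only [mem_insert, mem_singleton] at hx hy
  rcases hx with rfl | rfl <;> rcases hy with rfl | rfl
  all_goals first | exact hP | exact hP.symm | exact absurd Reachable.rfl hP.1

end Contraction

section MinPre

variable {V : Type*} [DecidableEq V] {K : Finset (Finset V)} {h : Finset V → ℝ}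
  {prec : Finset V → Finset V → Prop} {u v : V}

theorem exists_minPre [Fintype V] (hprec : PrecOK K h prec) {σ' : Finset V}
    (hσ' : σ' ∈ K.image (xi u v)) : ∃ σ, MinPre K u v prec σ' σ := by
  obtain ⟨σ, hσ, hσmin⟩ := hprec.exists_least (filter_subset (xi u v · = σ') K)
    (by simpa [Finset.Nonempty] using hσ')
  exact ⟨σ, (mem_filter.1 hσ).1, (mem_filter.1 hσ).2,
    fun ρ hρ hxρ => hσmin ρ (mem_filter.2 ⟨hρ, hxρ⟩)⟩

theorem minPre_singleton (hh : IsHeight K h) (hprec : PrecOK K h prec) (huvprec : prec {u} {v})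
    {w : V} (hw : ({w} : Finset V) ∈ K) (hwv : w ≠ v) : MinPre K u v prec {w} {w} := by
  refine ⟨hw, by rw [xi_singleton, cmap_of_ne hwv], fun ρ hρ hxρ => ?_⟩
  by_cases hvρ : v ∈ ρ
  swap
  · exact Or.inl (by rw [← xi_of_notMem hvρ, hxρ])
  have hpre : ∀ a ∈ ρ, cmap u v a = w := fun a ha =>
    mem_singleton.1 (hxρ ▸ mem_image_of_mem (cmap u v) ha)
  obtain rfl : u = w := cmap_right (u := u) ▸ hpre v hvρ
  right
  by_cases huρ : u ∈ ρ
  · refine hprec.prec_of_ssubset hh hw hρ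
      (Finset.ssubset_iff_subset_ne.2 ⟨singleton_subset_iff.2 huρ, ?_⟩)
    rintro rfl
    exact hwv (mem_singleton.1 hvρ).symm
  · convert huvprec
    refine eq_singleton_iff_unique_mem.2 ⟨hvρ, fun a ha => ?_⟩
    by_contra hav
    have hau := hpre a ha
    rw [cmap_of_ne hav] at hau
    exact huρ (hau ▸ ha)

variable [IsStrictOrder (Finset V) prec]

theorem MinPre.unique {σ' σ τ : Finset V} (hσ : MinPre K u v prec σ' σ)
    (hτ : MinPre K u v prec σ' τ) : σ = τ :=
  ((hσ.2.2 τ hτ.1 hτ.2.1).resolve_right fun hστ =>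
    (hτ.2.2 σ hσ.1 hσ.2.1).elim (fun h => irrefl _ (h ▸ hστ)) (asymm hστ)).symm

theorem precInd_iff {σ' τ' σ τ : Finset V} (hσ : MinPre K u v prec σ' σ)
    (hτ : MinPre K u v prec τ' τ) : precInd K u v prec σ' τ' ↔ prec σ τ :=
  ⟨fun ⟨_, _, hσ', hτ', h⟩ => hσ.unique hσ' ▸ hτ.unique hτ' ▸ h,
    fun h => ⟨σ, τ, hσ, hτ, h⟩⟩

end MinPre

section LinkCondition

variable {V : Type*} [DecidableEq V] {K : Finset (Finset V)} {h : Finset V → ℝ}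
  {prec : Finset V → Finset V → Prop} {u v : V}

theorem LinkCond.insert_mem (hK : IsComplex K) (hlink : LinkCond K u v) {z : V} (hzu : z ≠ u)
    (hzv : z ≠ v) (hzuK : ({z, u} : Finset V) ∈ K) (hzvK : ({z, v} : Finset V) ∈ K) :
    insert z ({u, v} : Finset V) ∈ K := by
  have hz : ({z} : Finset V) ∈ K := hK.2 _ hzuK _ (by simp) (singleton_nonempty z)
  have hlk : ({z} : Finset V) ∈ lk K {u} ∩ lk K {v} := by
    simp only [lk, mem_inter, mem_filter, ← insert_eq]
    exact ⟨⟨hz, singleton_inter_of_notMem (mem_singleton.not.2 hzu), hzuK⟩, hz,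
      singleton_inter_of_notMem (mem_singleton.not.2 hzv), hzvK⟩
  rw [← hlink, lk, mem_filter] at hlk
  rw [insert_eq]
  exact hlk.2.2

theorem eq_pair_of_subset_insert_pair {z : V} {d : Finset V} (hd : d ⊆ insert z {u, v})
    (hdc : d.card = 2) (hduv : d ≠ {u, v}) : d = {z, u} ∨ d = {z, v} := by
  obtain ⟨a, b, hab, rfl⟩ := card_eq_two.1 hdc
  simp only [insert_subset_iff, mem_insert, mem_singleton, singleton_subset_iff] at hd
  grind [pair_comm]

theorem exists_eq_pair_of_mem {e : Finset V} (hec : e.card = 2) (heuv : e ≠ {u, v})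
    (hmem : u ∈ e ∨ v ∈ e) : ∃ z, z ≠ u ∧ z ≠ v ∧ (e = {z, u} ∨ e = {z, v}) := by
  obtain ⟨a, b, hab, rfl⟩ := card_eq_two.1 hec
  simp only [mem_insert, mem_singleton] at hmem
  by_cases ha : a = u ∨ a = v
  · refine ⟨b, ?_, ?_, ?_⟩ <;> grind [pair_comm]
  · refine ⟨a, ?_, ?_, ?_⟩ <;> grind [pair_comm]

theorem eq_pair_of_xi_eq_pair {z : V} {ρ : Finset V} (hzu : z ≠ u)
    (hρ : xi u v ρ = {z, u}) : ρ = {z, u} ∨ ρ = {z, v} ∨ insert z {u, v} ⊆ ρ := by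
  have hpre : ∀ b, b ∈ ({z, u} : Finset V) ↔ ∃ a ∈ ρ, cmap u v a = b := fun b => by
    rw [← hρ]; exact mem_image
  have hzρ : z ∈ ρ := by
    obtain ⟨a, ha, haz⟩ := (hpre z).1 (by simp)
    unfold cmap at haz
    grind
  have hsub : ∀ a ∈ ρ, a = z ∨ a = u ∨ a = v := fun a ha => by
    have := (hpre _).2 ⟨a, ha, rfl⟩
    unfold cmap at this
    grind
  have huvρ : u ∈ ρ ∨ v ∈ ρ := by
    obtain ⟨a, ha, hau⟩ := (hpre u).1 (by simp)
    unfold cmap at hau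
    grind
  simp only [Finset.ext_iff, insert_subset_iff, mem_insert, mem_singleton, singleton_subset_iff]
  grind

theorem minPre_xi_of_edge (hh : IsHeight K h) (hprec : PrecOK K h prec) (hne : u ≠ v)
    {e : Finset V} (heK : e ∈ K) (hec : e.card = 2) (heuv : e ≠ {u, v})
    (hpartner : ∀ z, z ≠ u → z ≠ v → ∀ ρ ∈ K, (e = {z, u} ∨ e = {z, v}) →
      (ρ = {z, u} ∨ ρ = {z, v}) → ρ ≠ e → prec e ρ) :
    MinPre K u v prec (xi u v e) e := by
  refine ⟨heK, rfl, fun ρ hρ hxρ => or_iff_not_imp_left.2 fun hρe => ?_⟩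
  by_cases hmem : u ∈ e ∨ v ∈ e
  swap
  · rw [not_or] at hmem
    have hvρ : v ∉ ρ := fun hv => by
      have hu : cmap u v v ∈ xi u v ρ := mem_image_of_mem (cmap u v) hv
      rw [cmap_right, hxρ, xi_of_notMem hmem.2] at hu
      exact hmem.1 hu
    exact absurd (by rw [← xi_of_notMem hvρ, hxρ, xi_of_notMem hmem.2]) hρe
  obtain ⟨z, hzu, hzv, hez⟩ := exists_eq_pair_of_mem hec heuv hmem
  have hxe : xi u v e = {z, u} := by
    rcases hez with rfl | rfl <;> simp [xi_pair, cmap_of_ne hzv, cmap_of_ne hne, cmap_right]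
  rcases eq_pair_of_xi_eq_pair hzu (hxρ.trans hxe) with hρz | hρz | hT
  · exact hpartner z hzu hzv ρ hρ hez (Or.inl hρz) hρe
  · exact hpartner z hzu hzv ρ hρ hez (Or.inr hρz) hρe
  · have he : e ⊆ insert z {u, v} := by
      rcases hez with rfl | rfl <;> simp [insert_subset_iff]
    exact hprec.prec_of_ssubset hh heK hρ ((he.trans hT).ssubset_of_ne (Ne.symm hρe))

theorem eq_and_eq_of_mem_pair {α : Type*} {A B X Y P Q : α} (hX : X = A ∨ X = B)
    (hY : Y = A ∨ Y = B) (hXY : X ≠ Y) (hP : P = A ∨ P = B) (hQ : Q = A ∨ Q = B)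
    (hPQ : P ≠ Q) (hPY : P ≠ Y) : P = X ∧ Q = Y := by
  grind

theorem prec_of_edges_of_triangle {z : V} {t e₁ e₁' e ρ : Finset V} (ht : insert z {u, v} = t)
    (he1 : e₁ ⊆ t) (he1c : e₁.card = 2) (he1uv : e₁ ≠ {u, v})
    (he1' : e₁' ⊆ t) (he1'c : e₁'.card = 2) (he1'uv : e₁' ≠ {u, v})
    (he11' : e₁ ≠ e₁') (hp1 : prec e₁ e₁')
    (he : e = {z, u} ∨ e = {z, v}) (hρ : ρ = {z, u} ∨ ρ = {z, v}) (hρe : ρ ≠ e)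
    (hee1 : e ≠ e₁') : prec e ρ := by
  subst ht
  obtain ⟨rfl, rfl⟩ := eq_and_eq_of_mem_pair (eq_pair_of_subset_insert_pair he1 he1c he1uv)
    (eq_pair_of_subset_insert_pair he1' he1'c he1'uv) he11' he hρ hρe.symm hee1
  exact hp1

/-- The hypothesis `hpartner` of `minPre_xi_of_edge`: by the link condition, `{z,u}` and `{z,v}`
span `t₁` or `t₂`, where `e ≠ eᵢ'` forces `e = eᵢ ≺ eᵢ'`. -/
theorem prec_partner_of_linkCond (hK : IsComplex K) (hne : u ≠ v) (hlink : LinkCond K u v)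
    {t₁ t₂ e₁ e₁' e₂ e₂' : Finset V}
    (honly : ∀ t ∈ K, t.card = 3 → ({u, v} : Finset V) ⊆ t → t = t₁ ∨ t = t₂)
    (he1 : e₁ ⊆ t₁) (he1c : e₁.card = 2) (he1uv : e₁ ≠ {u, v})
    (he1' : e₁' ⊆ t₁) (he1'c : e₁'.card = 2) (he1'uv : e₁' ≠ {u, v})
    (he11' : e₁ ≠ e₁') (hp1 : prec e₁ e₁')
    (he2 : e₂ ⊆ t₂) (he2c : e₂.card = 2) (he2uv : e₂ ≠ {u, v})
    (he2' : e₂' ⊆ t₂) (he2'c : e₂'.card = 2) (he2'uv : e₂' ≠ {u, v})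
    (he22' : e₂ ≠ e₂') (hp2 : prec e₂ e₂')
    {e : Finset V} (heK : e ∈ K) (hee1 : e ≠ e₁') (hee2 : e ≠ e₂') :
    ∀ z, z ≠ u → z ≠ v → ∀ ρ ∈ K, (e = {z, u} ∨ e = {z, v}) →
      (ρ = {z, u} ∨ ρ = {z, v}) → ρ ≠ e → prec e ρ := by
  intro z hzu hzv ρ hρ he hρz hρe
  have hT : insert z {u, v} ∈ K := by
    apply LinkCond.insert_mem hK hlink hzu hzv <;>
      rcases he with rfl | rfl <;> rcases hρz with rfl | rfl <;>
      first | assumption | exact absurd rfl hρe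
  have hTc : (insert z {u, v} : Finset V).card = 3 := by
    rw [card_insert_of_notMem (by simp [hzu, hzv]), card_pair hne]
  rcases honly _ hT hTc (subset_insert _ _) with ht | ht
  · exact prec_of_edges_of_triangle ht he1 he1c he1uv he1' he1'c he1'uv he11' hp1
      he hρz hρe hee1
  · exact prec_of_edges_of_triangle ht he2 he2c he2uv he2' he2'c he2'uv he22' hp2
      he hρz hρe hee2

end LinkCondition

section Transfer

open SimpleGraph

variable {V : Type*} [DecidableEq V] {K : Finset (Finset V)} {h : Finset V → ℝ}
  {prec : Finset V → Finset V → Prop} {u v : V} {e : Finset V}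

theorem vertGraph_image_adj [Fintype V] (hprec : PrecOK K h prec)
    (hME : MinPre K u v prec (xi u v e) e) {a b : V} (hab : (vertGraph K prec e).Adj a b) :
    cmap u v a = cmap u v b ∨
      (vertGraph (K.image (xi u v)) (precInd K u v prec) (xi u v e)).Adj (cmap u v a)
        (cmap u v b) := by
  have := hprec.isStrictOrder
  refine or_iff_not_imp_left.2 fun hne => ?_
  have habK : xi u v {a, b} ∈ K.image (xi u v) := mem_image_of_mem _ hab.2.1
  obtain ⟨d, hd⟩ := exists_minPre hprec habK
  rw [xi_pair] at habK hd
  refine ⟨hne, habK, (precInd_iff hd hME).2 ?_⟩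
  rcases hd.2.2 _ hab.2.1 (xi_pair a b) with rfl | hlt
  exacts [hab.2.2, _root_.trans hlt hab.2.2]

theorem exists_adj_of_vertGraph_image_adj [Fintype V] (hK : IsComplex K) (hh : IsHeight K h)
    (hprec : PrecOK K h prec) (hME : MinPre K u v prec (xi u v e) e) {a b : V}
    (hab : (vertGraph (K.image (xi u v)) (precInd K u v prec) (xi u v e)).Adj a b) :
    ∃ p q, (vertGraph K prec e).Adj p q ∧ cmap u v p = a ∧ cmap u v q = b := by
  have := hprec.isStrictOrder
  obtain ⟨hab, habK, hlt⟩ := hab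
  obtain ⟨d, hd⟩ := exists_minPre hprec habK
  have hde : prec d e := (precInd_iff hd hME).1 hlt
  obtain ⟨p, hp, rfl⟩ := mem_image.1 (hd.2.1 ▸ mem_insert_self a {b} : a ∈ xi u v d)
  obtain ⟨q, hq, rfl⟩ :=
    mem_image.1 (hd.2.1 ▸ mem_insert_of_mem (mem_singleton_self b) : b ∈ xi u v d)
  have hsub : ({p, q} : Finset V) ⊆ d := insert_subset hp (singleton_subset_iff.2 hq)
  have hpqK : ({p, q} : Finset V) ∈ K := hK.2 d hd.1 _ hsub (insert_nonempty _ _)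
  refine ⟨p, q, ⟨fun hpq => hab (hpq ▸ rfl), hpqK, ?_⟩, rfl, rfl⟩
  rcases hsub.eq_or_ssubset with hpqd | hpqd
  exacts [hpqd ▸ hde, _root_.trans (hprec.prec_of_ssubset hh hpqK hd.1 hpqd) hde]

theorem reachable_image_iff [Fintype V] (hK : IsComplex K) (hh : IsHeight K h)
    (hprec : PrecOK K h prec) (hME : MinPre K u v prec (xi u v e) e) {p q : V} :
    (vertGraph (K.image (xi u v)) (precInd K u v prec) (xi u v e)).Reachable (cmap u v p)
      (cmap u v q) ↔ (vertGraph K prec e ⊔ edge u v).Reachable p q := by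
  constructor
  · refine Reachable.of_map
      (fun p q hpq => (reachable_cmap p).trans (hpq ▸ reachable_cmap q).symm) fun a b hab => ?_
    obtain ⟨p, q, hpq, hp, hq⟩ := exists_adj_of_vertGraph_image_adj hK hh hprec hME hab
    exact ⟨p, q, Or.inl hpq, hp, hq⟩
  · refine Reachable.map_of_adj fun a b hab => ?_
    rcases hab with hab | hab
    · exact vertGraph_image_adj hprec hME hab
    · obtain ⟨⟨rfl, rfl⟩ | ⟨rfl, rfl⟩, -⟩ := (edge_adj ..).1 hab <;>
        exact Or.inl (by rw [cmap_left, cmap_right])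

theorem eq_of_vertGraph_image_reachable (hne : u ≠ v) {prec' : Finset V → Finset V → Prop}
    {e' : Finset V} {a : V} (ha : (vertGraph (K.image (xi u v)) prec' e').Reachable a v) :
    a = v := by
  rw [reachable_iff_reflTransGen] at ha
  obtain rfl | ⟨c, -, hcv⟩ := ha.cases_tail
  · rfl
  obtain ⟨σ, -, hσ⟩ := mem_image.1 hcv.2.1
  exact absurd (hσ ▸ mem_insert_of_mem (mem_singleton_self v)) (notMem_xi hne σ)

theorem minPre_of_reachable (hK : IsComplex K) (hh : IsHeight K h) (hprec : PrecOK K h prec)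
    (huv : ({u, v} : Finset V) ∈ K) (huvprec : prec {u} {v}) {z w : V}
    (hz : ({z} : Finset V) ∈ K) (hzw : (vertGraph K prec e ⊔ edge u v).Reachable z w)
    (hwv : w ≠ v) : MinPre K u v prec {w} {w} :=
  minPre_singleton hh hprec huvprec
    (singleton_mem_of_reachable hK (fun _ _ => mem_of_sup_edge_adj huv) hz hzw) hwv

theorem LeastVert.image [Fintype V] (hK : IsComplex K) (hh : IsHeight K h)
    (hprec : PrecOK K h prec) (huv : ({u, v} : Finset V) ∈ K) (huvprec : prec {u} {v})
    (hME : MinPre K u v prec (xi u v e) e) {x w : V}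
    (hw : LeastVert (vertGraph K prec e ⊔ edge u v) prec x w)
    (hx : ({x} : Finset V) ∈ K) :
    LeastVert (vertGraph (K.image (xi u v)) (precInd K u v prec) (xi u v e))
      (precInd K u v prec) (cmap u v x) (cmap u v w) := by
  have := hprec.isStrictOrder
  have hne : u ≠ v := fun h => irrefl _ (h ▸ huvprec)
  have hwv := hw.ne_of_sup_edge huvprec
  refine ⟨(reachable_image_iff hK hh hprec hME).2 hw.1, fun w' hw' => ?_⟩
  have hw'v : w' ≠ v := fun h => cmap_ne hne x (eq_of_vertGraph_image_reachable hne (h ▸ hw'))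
  rw [← cmap_of_ne hw'v] at hw'
  have hxw' := (reachable_image_iff hK hh hprec hME).1 hw'
  rw [cmap_of_ne hwv]
  refine (hw.2 w' hxw').imp_right fun hlt => (precInd_iff ?_ ?_).2 hlt
  exacts [minPre_of_reachable hK hh hprec huv huvprec hx hw.1 hwv,
    minPre_of_reachable hK hh hprec huv huvprec hx hxw' hw'v]

theorem IsPairedIn.image [Fintype V] (hK : IsComplex K) (hh : IsHeight K h)
    (hprec : PrecOK K h prec) (huv : ({u, v} : Finset V) ∈ K) (huvprec : prec {u} {v})
    (hME : MinPre K u v prec (xi u v e) e) {r x y : V}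
    (hP : IsPairedIn (vertGraph K prec e ⊔ edge u v) prec r x y) (hx : ({x} : Finset V) ∈ K)
    (hy : ({y} : Finset V) ∈ K) :
    IsPairedIn (vertGraph (K.image (xi u v)) (precInd K u v prec) (xi u v e))
      (precInd K u v prec) (cmap u v r) (cmap u v x) (cmap u v y) := by
  have := hprec.isStrictOrder
  obtain ⟨hxy, wx, wy, hwx, hwy, hmax⟩ := hP
  refine ⟨fun h => hxy ((reachable_image_iff hK hh hprec hME).1 h), cmap u v wx, cmap u v wy,
    hwx.image hK hh hprec huv huvprec hME hx, hwy.image hK hh hprec huv huvprec hME hy, ?_⟩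
  have hwxv := hwx.ne_of_sup_edge huvprec
  have hwyv := hwy.ne_of_sup_edge huvprec
  have hmx := minPre_of_reachable hK hh hprec huv huvprec hx hwx.1 hwxv
  have hmy := minPre_of_reachable hK hh hprec huv huvprec hy hwy.1 hwyv
  rcases hmax with ⟨hlt, rfl⟩ | ⟨hlt, rfl⟩ <;> rw [cmap_of_ne hwxv, cmap_of_ne hwyv]
  · exact Or.inl ⟨(precInd_iff hmx hmy).2 hlt, rfl⟩
  · exact Or.inr ⟨(precInd_iff hmy hmx).2 hlt, rfl⟩

end Transfer

variable {V : Type*} [Fintype V] [DecidableEq V]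

theorem contraction_preserves_vertex_edge_pairs_general
    (K : Finset (Finset V)) (h : Finset V → ℝ) (u v : V)
    (prec : Finset V → Finset V → Prop) (t₁ t₂ e₁ e₁' e₂ e₂' : Finset V)
    (hK : IsComplex K) (hh : IsHeight K h)
    (hprec : PrecOK K h prec)
    (huv : ({u, v} : Finset V) ∈ K) (hne : u ≠ v) (huvprec : prec {u} {v})
    -- `t₁` and `t₂` are the two triangles of `K` containing `{u,v}`
    (honly : ∀ t ∈ K, t.card = 3 → ({u, v} : Finset V) ⊆ t → t = t₁ ∨ t = t₂)
    -- `e₁ ≺ e₁'` are the two edges of `t₁` other than `{u,v}`,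
    -- and `e₂ ≺ e₂'` those of `t₂`
    (he1 : e₁ ⊆ t₁) (he1c : e₁.card = 2) (he1uv : e₁ ≠ {u, v})
    (he1' : e₁' ⊆ t₁) (he1'c : e₁'.card = 2) (he1'uv : e₁' ≠ {u, v})
    (he11' : e₁ ≠ e₁') (hp1 : prec e₁ e₁')
    (he2 : e₂ ⊆ t₂) (he2c : e₂.card = 2) (he2uv : e₂ ≠ {u, v})
    (he2' : e₂' ⊆ t₂) (he2'c : e₂'.card = 2) (he2'uv : e₂' ≠ {u, v})
    (he22' : e₂ ≠ e₂') (hp2 : prec e₂ e₂')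
    -- admissibility of `{u,v}`
    (hlink : LinkCond K u v)
    (hpairuv : PairedVE K prec v {u, v})
    -- the edge `e` and its persistence partner `r`
    (e : Finset V) (r : V)
    (hee : e ≠ {u, v}) (hee1 : e ≠ e₁') (hee2 : e ≠ e₂')
    (hpair : PairedVE K prec r e) :
    PairedVE (K.image (xi u v)) (precInd K u v prec) (cmap u v r) (xi u v e) := by
  have := hprec.isStrictOrder
  obtain ⟨heK, x, y, rfl, hP⟩ := pairedVE_iff.1 hpair
  have hxy : x ≠ y := fun hxy => hP.1 (hxy ▸ SimpleGraph.Reachable.rfl)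
  have hME : MinPre K u v prec (xi u v {x, y}) {x, y} :=
    minPre_xi_of_edge hh hprec hne heK (card_pair hxy) hee
      (prec_partner_of_linkCond hK hne hlink honly he1 he1c he1uv he1' he1'c he1'uv he11' hp1
        he2 he2c he2uv he2' he2'c he2'uv he22' hp2 heK hee1 hee2)
  refine pairedVE_iff.2 ⟨mem_image_of_mem _ heK, cmap u v x, cmap u v y, xi_pair x y, ?_⟩
  refine IsPairedIn.image hK hh hprec huv huvprec hME ?_ (hK.2 _ heK _ (by simp) (by simp))
    (hK.2 _ heK _ (by simp) (by simp))
  rcases hprec.2.2.1 _ heK _ huv hee with hlt | hgt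
  · obtain ⟨m, hm⟩ := exists_leastVert (G := vertGraph K prec {x, y}) hK hprec
      (fun _ _ hab => hab.2.1) (hK.2 _ huv {u} (by simp) (by simp))
    exact hP.sup_edge (vertGraph_mono hlt) ⟨hxy, heK, hlt⟩ hpairuv.isPairedIn huvprec hm
  · have huvadj : (vertGraph K prec {x, y}).Adj u v := ⟨hne, huv, hgt⟩
    rwa [SimpleGraph.sup_edge_of_adj _ huvadj]

/-- if `{u,v}` is admissible and the edge `e ∉ {{u,v}, e₁′, e₂′}` is paired
with the vertex `r` in `K`, then `ξ(e)` is paired with `ξ(r)` in the contracted complex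
`K′` with respect to the induced order. -/
theorem contraction_preserves_vertex_edge_pairs
    (K : Finset (Finset V)) (h : Finset V → ℝ) (u v : V)
    (prec : Finset V → Finset V → Prop) (t₁ t₂ e₁ e₁' e₂ e₂' : Finset V)
    (hK : IsComplex K) (hman : ClosedTwoManifold K) (hh : IsHeight K h)
    (hprec : PrecOK K h prec)
    (huv : ({u, v} : Finset V) ∈ K) (hne : u ≠ v) (huvprec : prec {u} {v})
    -- `t₁` and `t₂` are the two triangles of `K` containing `{u,v}`
    (ht1 : t₁ ∈ K) (ht1c : t₁.card = 3) (ht1uv : ({u, v} : Finset V) ⊆ t₁)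
    (ht2 : t₂ ∈ K) (ht2c : t₂.card = 3) (ht2uv : ({u, v} : Finset V) ⊆ t₂)
    (ht12 : t₁ ≠ t₂)
    (honly : ∀ t ∈ K, t.card = 3 → ({u, v} : Finset V) ⊆ t → t = t₁ ∨ t = t₂)
    -- `e₁ ≺ e₁'` are the two edges of `t₁` other than `{u,v}`,
    -- and `e₂ ≺ e₂'` those of `t₂`
    (he1 : e₁ ⊆ t₁) (he1c : e₁.card = 2) (he1uv : e₁ ≠ {u, v})
    (he1' : e₁' ⊆ t₁) (he1'c : e₁'.card = 2) (he1'uv : e₁' ≠ {u, v})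
    (he11' : e₁ ≠ e₁') (hp1 : prec e₁ e₁')
    (he2 : e₂ ⊆ t₂) (he2c : e₂.card = 2) (he2uv : e₂ ≠ {u, v})
    (he2' : e₂' ⊆ t₂) (he2'c : e₂'.card = 2) (he2'uv : e₂' ≠ {u, v})
    (he22' : e₂ ≠ e₂') (hp2 : prec e₂ e₂')
    -- admissibility of `{u,v}`
    (hlink : LinkCond K u v)
    (hpairuv : PairedVE K prec v {u, v})
    (hpair1 : PairedET K prec e₁' t₁)
    (hpair2 : PairedET K prec e₂' t₂)
    -- the edge `e` and its persistence partner `r`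
    (e : Finset V) (r : V)
    (hee : e ≠ {u, v}) (hee1 : e ≠ e₁') (hee2 : e ≠ e₂')
    (hpair : PairedVE K prec r e) :
    PairedVE (K.image (xi u v)) (precInd K u v prec) (cmap u v r) (xi u v e) :=
  contraction_preserves_vertex_edge_pairs_general K h u v prec t₁ t₂ e₁ e₁' e₂ e₂' hK hh hprec huv
    hne huvprec honly he1 he1c he1uv he1' he1'c he1'uv he11' hp1 he2 he2c he2uv he2' he2'c he2'uv
    he22' hp2 hlink hpairuv e r hee hee1 hee2 hpair
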